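/- Let μ be a probability measure on ℂ with finite 1-energy, let X_1, X_2, … be i.i.d. with law μ, and let V_{μ,n}(z) := (1/n) Σ_{j=1}^n 1/(z − X_j). Then |V_{μ,n}(X_{n+1}) − V_μ(X_{n+1})| → 0 in probability as n → ∞, where V_μ(z) = ∫ 1/(z−w) dμ(w). -/

import Mathlib

/-!
Since `X (n + 1)` is independent of `X 1, …, X n`, the expected error equals
`∫ 𝔼 ‖V_{μ,n}(z) - V_μ(z)‖ dμ(z)`. Finite 1-energy makes `w ↦ (z - w)⁻¹` μ-integrable for
μ-a.e. `z`, so the L¹ law of large numbers sends the integrand to `0`; the integrand is dominated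
by `2 ∫ ‖z - w‖⁻¹ dμ(w)`, which is μ-integrable by finite energy again. Dominated convergence
gives convergence in L¹, hence in probability.
-/

open MeasureTheory ProbabilityTheory Filter

open scoped ENNReal Topology

section EmpiricalMean

variable {Ω β E : Type*} [NormedAddCommGroup E] [NormedSpace ℝ E]

/-- Samples are indexed from `1`: `X 0` does not enter. -/
noncomputable def empiricalMean (φ : β → E) (X : ℕ → Ω → β) (n : ℕ) (ω : Ω) : E :=
  (n : ℝ)⁻¹ • ∑ j ∈ Finset.Icc 1 n, φ (X j ω)

lemma empiricalMean_eq_smul_sum_range (φ : β → E) (X : ℕ → Ω → β) (n : ℕ) (ω : Ω) :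
    empiricalMean φ X n ω = (n : ℝ)⁻¹ • ∑ i ∈ Finset.range n, φ (X (i + 1) ω) := by
  rw [empiricalMean, ← Finset.Ico_add_one_right_eq_Icc, Finset.sum_Ico_eq_sum_range]
  simp [add_comm]

lemma enorm_empiricalMean_le (φ : β → E) (X : ℕ → Ω → β) (n : ℕ) (ω : Ω) :
    ‖empiricalMean φ X n ω‖ₑ ≤ (n : ℝ≥0∞)⁻¹ * ∑ j ∈ Finset.Icc 1 n, ‖φ (X j ω)‖ₑ := by
  rw [empiricalMean, enorm_smul]
  gcongr
  · rcases n.eq_zero_or_pos with rfl | hn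
    · simp
    · rw [enorm_inv (by positivity), Real.enorm_natCast]
  · exact enorm_sum_le _ _

variable [MeasurableSpace Ω] [MeasurableSpace β] {P : Measure Ω} {X : ℕ → Ω → β}
  {μ : Measure β} {φ : β → E}

theorem lintegral_enorm_empiricalMean_sub_integral_le [IsProbabilityMeasure P]
    (hX : ∀ i, Measurable (X i)) (hlaw : ∀ i, P.map (X i) = μ) (hφ : StronglyMeasurable φ)
    (n : ℕ) :
    ∫⁻ ω, ‖empiricalMean φ X n ω - ∫ x, φ x ∂μ‖ₑ ∂P ≤ 2 * ∫⁻ x, ‖φ x‖ₑ ∂μ := by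
  set I := ∫⁻ x, ‖φ x‖ₑ ∂μ with hI
  have hmeas (j : ℕ) : Measurable fun ω ↦ ‖φ (X j ω)‖ₑ := (hφ.comp_measurable (hX j)).enorm
  have hsample (j : ℕ) : ∫⁻ ω, ‖φ (X j ω)‖ₑ ∂P = I := by
    rw [hI, ← hlaw j, lintegral_map hφ.enorm (hX j)]
  have hmean : ∫⁻ ω, ‖empiricalMean φ X n ω‖ₑ ∂P ≤ I :=
    calc ∫⁻ ω, ‖empiricalMean φ X n ω‖ₑ ∂P
        ≤ ∫⁻ ω, (n : ℝ≥0∞)⁻¹ * ∑ j ∈ Finset.Icc 1 n, ‖φ (X j ω)‖ₑ ∂P :=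
          lintegral_mono fun ω ↦ enorm_empiricalMean_le φ X n ω
      _ = (n : ℝ≥0∞)⁻¹ * (n * I) := by
          rw [lintegral_const_mul _ (Finset.measurable_sum _ fun j _ ↦ hmeas j),
            lintegral_finsetSum _ fun j _ ↦ hmeas j]
          simp [hsample]
      _ ≤ I := by
          rw [← mul_assoc]
          exact mul_le_of_le_one_left zero_le (ENNReal.inv_mul_le_one _)
  calc ∫⁻ ω, ‖empiricalMean φ X n ω - ∫ x, φ x ∂μ‖ₑ ∂P
      ≤ ∫⁻ ω, ‖empiricalMean φ X n ω‖ₑ + ‖∫ x, φ x ∂μ‖ₑ ∂P :=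
        lintegral_mono fun ω ↦ enorm_sub_le
    _ = ∫⁻ ω, ‖empiricalMean φ X n ω‖ₑ ∂P + ‖∫ x, φ x ∂μ‖ₑ := by
        rw [lintegral_add_right _ measurable_const, lintegral_const, measure_univ, mul_one]
    _ ≤ I + I := add_le_add hmean (enorm_integral_le_lintegral_enorm φ)
    _ = 2 * I := (two_mul I).symm

variable [CompleteSpace E] [MeasurableSpace E] [BorelSpace E]

theorem tendsto_lintegral_enorm_empiricalMean_sub_integral (hX : ∀ i, Measurable (X i))
    (hindep : iIndepFun X P) (hlaw : ∀ i, P.map (X i) = μ) (hφ : StronglyMeasurable φ)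
    (hint : Integrable φ μ) :
    Tendsto (fun n ↦ ∫⁻ ω, ‖empiricalMean φ X n ω - ∫ x, φ x ∂μ‖ₑ ∂P) atTop (𝓝 0) := by
  set Y : ℕ → Ω → E := fun i ω ↦ φ (X (i + 1) ω)
  have hY : MemLp (Y 0) 1 P := by
    rw [← hlaw 1] at hint
    exact memLp_one_iff_integrable.2 <|
      (integrable_map_measure hφ.aestronglyMeasurable (hX 1).aemeasurable).1 hint
  have hindepY : Pairwise fun i j ↦ IndepFun (Y i) (Y j) P := fun i j hij ↦
    (hindep.indepFun (by omega)).comp hφ.measurable hφ.measurable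
  have hident (i : ℕ) : IdentDistrib (Y i) (Y 0) P P :=
    (⟨(hX _).aemeasurable, (hX _).aemeasurable, by rw [hlaw, hlaw]⟩ :
      IdentDistrib (X (i + 1)) (X 1) P P).comp hφ.measurable
  have hmean : P[Y 0] = ∫ x, φ x ∂μ := by
    rw [← hlaw 1, integral_map (hX 1).aemeasurable hφ.aestronglyMeasurable]
  simpa [eLpNorm_one_eq_lintegral_enorm, empiricalMean_eq_smul_sum_range, Y, hmean] using
    strong_law_Lp le_rfl ENNReal.one_ne_top Y hY hindepY hident

end EmpiricalMean

theorem ProbabilityTheory.IndepFun.lintegral_comp_eq_lintegral_lintegral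
    {Ω α γ : Type*} [MeasurableSpace Ω] [MeasurableSpace α] [MeasurableSpace γ]
    {P : Measure Ω} [IsFiniteMeasure P] {Y : Ω → α} {Z : Ω → γ} (hYZ : IndepFun Y Z P)
    (hY : Measurable Y) (hZ : Measurable Z) {G : α → γ → ℝ≥0∞}
    (hG : Measurable (Function.uncurry G)) :
    ∫⁻ ω, G (Y ω) (Z ω) ∂P = ∫⁻ y, ∫⁻ ω, G y (Z ω) ∂P ∂(P.map Y) := by
  have hmap : P.map (fun ω ↦ (Y ω, Z ω)) = (P.map Y).prod (P.map Z) :=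
    (indepFun_iff_map_prod_eq_prod_map_map hY.aemeasurable hZ.aemeasurable).1 hYZ
  calc ∫⁻ ω, G (Y ω) (Z ω) ∂P
      = ∫⁻ p, Function.uncurry G p ∂(P.map fun ω ↦ (Y ω, Z ω)) :=
        (lintegral_map hG (hY.prodMk hZ)).symm
    _ = ∫⁻ y, ∫⁻ z, G y z ∂(P.map Z) ∂(P.map Y) := by
        rw [hmap, lintegral_prod _ hG.aemeasurable]; rfl
    _ = ∫⁻ y, ∫⁻ ω, G y (Z ω) ∂P ∂(P.map Y) := by
        congr! 2 with y
        exact lintegral_map (hG.comp measurable_prodMk_left) hZ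

section Kernel

variable {Ω β E : Type*} [MeasurableSpace Ω] [MeasurableSpace β] [NormedAddCommGroup E]
  [NormedSpace ℝ E] {P : Measure Ω} {X : ℕ → Ω → β} {μ : Measure β} {k : β → β → E}

theorem stronglyMeasurable_empiricalMean_sub_integral {γ : Type*} [MeasurableSpace γ] [SFinite μ]
    {Z : γ → β} {Y : ℕ → γ → β} (hZ : Measurable Z) (hY : ∀ i, Measurable (Y i))
    (hk : StronglyMeasurable (Function.uncurry k)) (n : ℕ) :
    StronglyMeasurable fun x ↦ empiricalMean (k (Z x)) Y n x - ∫ w, k (Z x) w ∂μ :=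
  .sub (.const_smul (Finset.stronglyMeasurable_fun_sum _ fun j _ ↦
    hk.comp_measurable (hZ.prodMk (hY j))) _) (hk.integral_prod_right'.comp_measurable hZ)

theorem measurable_lintegral_enorm_empiricalMean_sub_integral [SFinite P] [SFinite μ]
    (hX : ∀ i, Measurable (X i)) (hk : StronglyMeasurable (Function.uncurry k)) (n : ℕ) :
    Measurable fun z ↦ ∫⁻ ω, ‖empiricalMean (k z) X n ω - ∫ w, k z w ∂μ‖ₑ ∂P :=
  Measurable.lintegral_prod_right' (stronglyMeasurable_empiricalMean_sub_integral
    measurable_fst (fun j ↦ (hX j).comp measurable_snd) hk n).enorm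

theorem lintegral_enorm_empiricalMean_next_sub_integral_eq [IsProbabilityMeasure P] [SFinite μ]
    (hX : ∀ i, Measurable (X i)) (hindep : iIndepFun X P) (hlaw : ∀ i, P.map (X i) = μ)
    (hk : StronglyMeasurable (Function.uncurry k)) (n : ℕ) :
    ∫⁻ ω, ‖empiricalMean (k (X (n + 1) ω)) X n ω - ∫ w, k (X (n + 1) ω) w ∂μ‖ₑ ∂P =
      ∫⁻ z, ∫⁻ ω, ‖empiricalMean (k z) X n ω - ∫ w, k z w ∂μ‖ₑ ∂P ∂μ := by
  set S := Finset.Icc 1 n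
  have hindep' : IndepFun (X (n + 1)) (fun ω (j : S) ↦ X j ω) P :=
    (hindep.indepFun_finset {n + 1} S (by simp [S]) hX).comp
      (measurable_pi_apply (⟨n + 1, Finset.mem_singleton_self _⟩ : ({n + 1} : Finset ℕ)))
      measurable_id
  set G : β → (S → β) → ℝ≥0∞ := fun z v ↦ ‖(n : ℝ)⁻¹ • ∑ j : S, k z (v j) - ∫ w, k z w ∂μ‖ₑ
  have hG : Measurable (Function.uncurry G) := by
    refine StronglyMeasurable.enorm (.sub (.const_smul ?_ _) ?_)
    · exact Finset.stronglyMeasurable_fun_sum _ fun j _ ↦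
        hk.comp_measurable (measurable_fst.prodMk measurable_snd.eval)
    · exact hk.integral_prod_right'.comp_measurable measurable_fst
  have hmean (z : β) (ω : Ω) :
      empiricalMean (k z) X n ω = (n : ℝ)⁻¹ • ∑ j : S, k z (X j ω) := by
    rw [empiricalMean, Finset.sum_coe_sort S fun j ↦ k z (X j ω)]
  have h := hindep'.lintegral_comp_eq_lintegral_lintegral (hX _)
    (measurable_pi_lambda _ fun j ↦ hX j) hG
  rw [hlaw] at h
  simpa only [hmean] using h

variable [CompleteSpace E] [MeasurableSpace E] [BorelSpace E]

theorem tendsto_lintegral_enorm_empiricalMean_next_sub_integral [IsProbabilityMeasure P]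
    [SFinite μ] (hX : ∀ i, Measurable (X i)) (hindep : iIndepFun X P)
    (hlaw : ∀ i, P.map (X i) = μ) (hk : StronglyMeasurable (Function.uncurry k))
    (henergy : ∫⁻ z, ∫⁻ w, ‖k z w‖ₑ ∂μ ∂μ < ∞) :
    Tendsto (fun n ↦ ∫⁻ ω, ‖empiricalMean (k (X (n + 1) ω)) X n ω
      - ∫ w, k (X (n + 1) ω) w ∂μ‖ₑ ∂P) atTop (𝓝 0) := by
  have hk_left (z : β) : StronglyMeasurable (k z) := hk.comp_measurable measurable_prodMk_left
  have hfinite : ∀ᵐ z ∂μ, ∫⁻ w, ‖k z w‖ₑ ∂μ < ∞ :=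
    ae_lt_top hk.enorm.lintegral_prod_right' henergy.ne
  simp_rw [lintegral_enorm_empiricalMean_next_sub_integral_eq hX hindep hlaw hk]
  simpa using tendsto_lintegral_of_dominated_convergence (fun z ↦ 2 * ∫⁻ w, ‖k z w‖ₑ ∂μ)
    (measurable_lintegral_enorm_empiricalMean_sub_integral hX hk)
    (fun n ↦ .of_forall fun z ↦
      lintegral_enorm_empiricalMean_sub_integral_le hX hlaw (hk_left z) n)
    (by rw [lintegral_const_mul' _ _ ENNReal.ofNat_ne_top]
        exact ENNReal.mul_ne_top ENNReal.ofNat_ne_top henergy.ne)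
    (hfinite.mono fun z hz ↦ tendsto_lintegral_enorm_empiricalMean_sub_integral hX hindep hlaw
      (hk_left z) ⟨(hk_left z).aestronglyMeasurable, hz⟩)

theorem tendstoInMeasure_empiricalMean_next_sub_integral [IsProbabilityMeasure P]
    [SFinite μ] (hX : ∀ i, Measurable (X i)) (hindep : iIndepFun X P)
    (hlaw : ∀ i, P.map (X i) = μ) (hk : StronglyMeasurable (Function.uncurry k))
    (henergy : ∫⁻ z, ∫⁻ w, ‖k z w‖ₑ ∂μ ∂μ < ∞) :
    TendstoInMeasure P (fun n ω ↦ empiricalMean (k (X (n + 1) ω)) X n ω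
      - ∫ w, k (X (n + 1) ω) w ∂μ) atTop 0 := by
  refine tendstoInMeasure_of_tendsto_eLpNorm one_ne_zero (fun n ↦ ?_)
    aestronglyMeasurable_zero ?_
  · exact (stronglyMeasurable_empiricalMean_sub_integral (hX (n + 1)) hX hk n).aestronglyMeasurable
  · simpa [eLpNorm_one_eq_lintegral_enorm] using
      tendsto_lintegral_enorm_empiricalMean_next_sub_integral hX hindep hlaw hk henergy

end Kernel

/-- For `μ` of finite 1-energy and `X_i` i.i.d. with law `μ`,
`|V_{μ,n}(X_{n+1}) − V_μ(X_{n+1})| → 0` in probability, where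
`V_{μ,n}(z) = (1/n) Σ_{j=1}^n (z − X_j)⁻¹` and `V_μ(z) = ∫ (z−w)⁻¹ dμ(w)`. -/
theorem empirical_potential_tendsto_potential
    {Ω : Type*} [MeasureSpace Ω] [IsProbabilityMeasure (ℙ : Measure Ω)]
    (X : ℕ → Ω → ℂ) (hX : ∀ i, Measurable (X i))
    (hindep : iIndepFun X ℙ)
    (μ : Measure ℂ) [IsProbabilityMeasure μ] (hlaw : ∀ i, Measure.map (X i) ℙ = μ)
    (henergy : ∫⁻ z, ∫⁻ w, ENNReal.ofReal (1 / ‖z - w‖) ∂μ ∂μ < ⊤) :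
    ∀ ε > (0 : ℝ),
      Tendsto (fun n : ℕ =>
          (ℙ {ω | ε ≤ ‖(1 / n : ℂ) * ∑ j ∈ Finset.Icc 1 n, (X (n + 1) ω - X j ω)⁻¹
                    - ∫ w, (X (n + 1) ω - w)⁻¹ ∂μ‖}).toReal)
        atTop (nhds 0) := by
  have hk : StronglyMeasurable (Function.uncurry fun z w : ℂ ↦ (z - w)⁻¹) :=
    (measurable_fst.sub measurable_snd).inv.stronglyMeasurable
  have henergy' : ∫⁻ z, ∫⁻ w, ‖(z - w)⁻¹‖ₑ ∂μ ∂μ < ∞ := by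
    simpa only [one_div, ← norm_inv, ofReal_norm] using henergy
  intro ε hε
  have h := tendstoInMeasure_empiricalMean_next_sub_integral (P := ℙ)
    (k := fun z w : ℂ ↦ (z - w)⁻¹) hX hindep hlaw hk henergy'
  refine (tendstoInMeasure_iff_measureReal_norm.1 h ε hε).congr fun n ↦ ?_
  simp only [measureReal_def, Pi.zero_apply, sub_zero, empiricalMean, Complex.real_smul,
    Complex.ofReal_inv, Complex.ofReal_natCast, one_div]
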